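/- Let A_n = sqrt(Var f(X_n))/n be the accuracy of a counting chain and B_k = sqrt(g(k))/f(k). If limsup_{k→∞} B_k = λ < 1 and liminf_{k→∞} B_k = μ, then limsup_{n→∞} A_n ≤ λ/sqrt(1−λ^2) and liminf_{n→∞} A_n ≥ μ/sqrt(1−μ^2). -/

import Mathlib

/-- `stepProb q n k` is the probability `P(X_n = k)` for the counting chain with
transition probabilities `q`: the chain starts at `X_0 = 0` and from state `k`
moves to `k+1` with probability `q k`, otherwise stays at `k`. -/
noncomputable def stepProb (q : ℕ → ℝ) : ℕ → ℕ → ℝ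
  | 0, 0 => 1
  | 0, _ + 1 => 0
  | n + 1, 0 => (1 - q 0) * stepProb q n 0
  | n + 1, k + 1 => (1 - q (k + 1)) * stepProb q n (k + 1) + q k * stepProb q n k

lemma stepProb_nonneg {q : ℕ → ℝ} (hq : ∀ k, 0 < q k ∧ q k ≤ 1) :
    ∀ n k, 0 ≤ stepProb q n k := by
  intro n
  induction n with
  | zero =>
    intro k; cases k with
    | zero => simp [stepProb]
    | succ k => simp [stepProb]
  | succ n ih =>
    intro k; cases k with
    | zero =>
      have := (hq 0).2
      simpa [stepProb] using mul_nonneg (by linarith) (ih 0)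
    | succ k =>
      have h1 := (hq (k+1)).2
      have h2 := (hq k).1
      simp only [stepProb]
      have ha := ih (k+1); have hb := ih k
      have : 0 ≤ (1 - q (k+1)) * stepProb q n (k+1) := mul_nonneg (by linarith) ha
      have : 0 ≤ q k * stepProb q n k := mul_nonneg (le_of_lt h2) hb
      linarith

lemma stepProb_eq_zero {q : ℕ → ℝ} : ∀ n k, n < k → stepProb q n k = 0 := by
  intro n
  induction n with
  | zero =>
    intro k hk
    match k, hk with
    | k + 1, _ => simp [stepProb]
  | succ n ih =>
    intro k hk
    match k, hk with
    | k + 1, hk =>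
      have h1 : n < k + 1 := by omega
      have h2 : n < k := by omega
      simp [stepProb, ih _ h1, ih _ h2]

lemma exp_succ (q : ℕ → ℝ) (h : ℕ → ℝ) (n : ℕ) :
    ∑ k ∈ Finset.range (n + 2), stepProb q (n + 1) k * h k
      = ∑ k ∈ Finset.range (n + 1),
          stepProb q n k * ((1 - q k) * h k + q k * h (k + 1)) := by
  rw [Finset.sum_range_succ' (fun k => stepProb q (n+1) k * h k)]
  have e1 : ∀ j, stepProb q (n+1) (j+1) * h (j+1)
      = (1 - q (j+1)) * stepProb q n (j+1) * h (j+1)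
        + q j * stepProb q n j * h (j+1) := by
    intro j; simp only [stepProb]; ring
  simp only [e1]
  rw [Finset.sum_add_distrib]
  have e2 : ∑ j ∈ Finset.range (n+1), (1 - q (j+1)) * stepProb q n (j+1) * h (j+1)
      + stepProb q (n+1) 0 * h 0
      = ∑ k ∈ Finset.range (n+1), (1 - q k) * stepProb q n k * h k := by
    have := Finset.sum_range_succ' (fun k => (1 - q k) * stepProb q n k * h k) (n+1)
    rw [Finset.sum_range_succ] at this
    rw [stepProb_eq_zero n (n+1) (by omega)] at this
    simp only [stepProb]
    linarith [this]
  rw [add_right_comm, e2, ← Finset.sum_add_distrib]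
  apply Finset.sum_congr rfl
  intro k _; ring

lemma exp_mass {q : ℕ → ℝ} : ∀ n, ∑ k ∈ Finset.range (n + 1), stepProb q n k = 1 := by
  intro n
  induction n with
  | zero => simp [stepProb]
  | succ n ih =>
    have := exp_succ q (fun _ => 1) n
    simp only [mul_one] at this
    calc ∑ k ∈ Finset.range (n + 2), stepProb q (n+1) k
        = ∑ k ∈ Finset.range (n + 2), stepProb q (n+1) k * 1 := by simp
      _ = ∑ k ∈ Finset.range (n + 1), stepProb q n k * ((1 - q k) * 1 + q k * 1) :=
          exp_succ q (fun _ => 1) n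
      _ = ∑ k ∈ Finset.range (n + 1), stepProb q n k := by
          apply Finset.sum_congr rfl; intro k _; ring
      _ = 1 := ih

lemma exp_mean {q : ℕ → ℝ} (hq : ∀ k, 0 < q k ∧ q k ≤ 1) {f : ℕ → ℝ}
    (hf0 : f 0 = 0) (hfs : ∀ k, f (k + 1) = f k + (q k)⁻¹) :
    ∀ n, ∑ k ∈ Finset.range (n + 1), stepProb q n k * f k = n := by
  intro n
  induction n with
  | zero => simp [stepProb, hf0]
  | succ n ih =>
    rw [exp_succ q f n]
    have step : ∀ k, (1 - q k) * f k + q k * f (k + 1) = f k + 1 := by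
      intro k
      have hk := (hq k).1.ne'
      rw [hfs k]; field_simp; ring
    calc ∑ k ∈ Finset.range (n + 1), stepProb q n k * ((1 - q k) * f k + q k * f (k+1))
        = ∑ k ∈ Finset.range (n + 1), (stepProb q n k * f k + stepProb q n k) := by
          apply Finset.sum_congr rfl; intro k _; rw [step]; ring
      _ = (n : ℝ) + 1 := by rw [Finset.sum_add_distrib, ih, exp_mass]
      _ = ((n : ℕ) + 1 : ℕ) := by push_cast; ring

lemma exp_sq {q : ℕ → ℝ} (hq : ∀ k, 0 < q k ∧ q k ≤ 1) {f g : ℕ → ℝ}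
    (hf0 : f 0 = 0) (hfs : ∀ k, f (k + 1) = f k + (q k)⁻¹)
    (hg0 : g 0 = 0) (hgs : ∀ k, g (k + 1) = g k + (1 - q k) / (q k) ^ 2) :
    ∀ n, ∑ k ∈ Finset.range (n + 1), stepProb q n k * (f k ^ 2 - g k) = (n : ℝ) ^ 2 := by
  intro n
  induction n with
  | zero => simp [stepProb, hf0, hg0]
  | succ n ih =>
    rw [exp_succ q (fun k => f k ^ 2 - g k) n]
    have step : ∀ k, (1 - q k) * (f k ^ 2 - g k) + q k * (f (k+1) ^ 2 - g (k+1))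
        = (f k ^ 2 - g k) + (2 * f k + 1) := by
      intro k
      have hk := (hq k).1.ne'
      rw [hfs k, hgs k]; field_simp; ring
    calc ∑ k ∈ Finset.range (n + 1), stepProb q n k *
            ((1 - q k) * (f k ^ 2 - g k) + q k * (f (k+1) ^ 2 - g (k+1)))
        = ∑ k ∈ Finset.range (n + 1), (stepProb q n k * (f k ^ 2 - g k)
            + (2 * (stepProb q n k * f k) + stepProb q n k)) := by
          apply Finset.sum_congr rfl; intro k _; rw [step]; ring
      _ = (n : ℝ)^2 + (2 * n + 1) := by
          rw [Finset.sum_add_distrib, ih]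
          congr 1
          rw [Finset.sum_add_distrib, ← Finset.mul_sum, exp_mean hq hf0 hfs, exp_mass]
      _ = ((n : ℕ) + 1 : ℕ) ^ 2 := by push_cast; ring

lemma sqrt_add_le' (a b : ℝ) (ha : 0 ≤ a) (hb : 0 ≤ b) :
    Real.sqrt (a + b) ≤ Real.sqrt a + Real.sqrt b := by
  have h : a + b ≤ (Real.sqrt a + Real.sqrt b) ^ 2 := by
    nlinarith [Real.sq_sqrt ha, Real.sq_sqrt hb, Real.sqrt_nonneg a, Real.sqrt_nonneg b,
      mul_nonneg (Real.sqrt_nonneg a) (Real.sqrt_nonneg b)]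
  calc Real.sqrt (a + b) ≤ Real.sqrt ((Real.sqrt a + Real.sqrt b) ^ 2) := Real.sqrt_le_sqrt h
    _ = Real.sqrt a + Real.sqrt b := Real.sqrt_sq (by positivity)

set_option maxHeartbeats 1600000

/-- Accuracy theorem. With `f k = ∑_{i<k} 1/q i`,
`g k = ∑_{i<k} (1 − q i)/(q i)^2`, accuracy `A n = sqrt(Var f(X_n))/n`
(where `Var f(X_n) = E[f(X_n)^2] − n^2`) and `B k = sqrt(g k)/f k`:
if `limsup B = λ < 1` and `liminf B = μ`, then
`limsup A ≤ λ/sqrt(1 − λ^2)` and `liminf A ≥ μ/sqrt(1 − μ^2)`. -/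
theorem stmt_9 (q : ℕ → ℝ) (hq : ∀ k, 0 < q k ∧ q k ≤ 1)
    (f g : ℕ → ℝ)
    (hf : ∀ k, f k = ∑ i ∈ Finset.range k, (q i)⁻¹)
    (hg : ∀ k, g k = ∑ i ∈ Finset.range k, (1 - q i) / (q i) ^ 2)
    (A : ℕ → ℝ)
    (hA : ∀ n, A n =
      Real.sqrt ((∑ k ∈ Finset.range (n + 1), stepProb q n k * (f k) ^ 2) - (n : ℝ) ^ 2) / n)
    (B : ℕ → ℝ) (hB : ∀ k, B k = Real.sqrt (g k) / f k)
    (lam mu : ℝ)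
    (hlam : Filter.limsup B Filter.atTop = lam)
    (hmu : Filter.liminf B Filter.atTop = mu)
    (hlam1 : lam < 1) :
    Filter.limsup A Filter.atTop ≤ lam / Real.sqrt (1 - lam ^ 2) ∧
      Filter.liminf A Filter.atTop ≥ mu / Real.sqrt (1 - mu ^ 2) := by
  have hf0 : f 0 = 0 := by simp [hf]
  have hfs : ∀ k, f (k + 1) = f k + (q k)⁻¹ := by
    intro k; rw [hf, hf, Finset.sum_range_succ]
  have hg0 : g 0 = 0 := by simp [hg]
  have hgs : ∀ k, g (k + 1) = g k + (1 - q k) / (q k) ^ 2 := by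
    intro k; rw [hg, hg, Finset.sum_range_succ]
  have hfnn : ∀ k, 0 ≤ f k := by
    intro k; rw [hf]
    exact Finset.sum_nonneg fun i _ => inv_nonneg.2 (hq i).1.le
  have hfmono : Monotone f := by
    apply monotone_nat_of_le_succ
    intro k; rw [hfs k]
    have := inv_nonneg.2 (hq k).1.le; linarith
  have hfpos : ∀ k, 1 ≤ k → 0 < f k := by
    intro k hk
    have h1 : 0 < f 1 := by
      rw [hfs 0, hf0]; simpa using inv_pos.2 (hq 0).1
    exact h1.trans_le (hfmono hk)
  have hgnn : ∀ k, 0 ≤ g k := by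
    intro k; rw [hg]
    refine Finset.sum_nonneg fun i _ => div_nonneg ?_ (by positivity)
    linarith [(hq i).2]
  have hgmono : Monotone g := by
    apply monotone_nat_of_le_succ
    intro k; rw [hgs k]
    have : 0 ≤ (1 - q k) / (q k) ^ 2 := div_nonneg (by linarith [(hq k).2]) (by positivity)
    linarith
  have hgle : ∀ k, g k ≤ f k ^ 2 := by
    intro k; rw [hf, hg]
    calc ∑ i ∈ Finset.range k, (1 - q i) / (q i) ^ 2
        ≤ ∑ i ∈ Finset.range k, ((q i)⁻¹) ^ 2 := by
          refine Finset.sum_le_sum fun i _ => ?_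
          rw [inv_pow, inv_eq_one_div]
          exact div_le_div_of_nonneg_right (by linarith [(hq i).1]) (by positivity) |>.trans_eq rfl
      _ ≤ (∑ i ∈ Finset.range k, (q i)⁻¹) ^ 2 :=
          Finset.sum_sq_le_sq_sum_of_nonneg fun i _ => inv_nonneg.2 (hq i).1.le
  set V : ℕ → ℝ := fun n => ∑ k ∈ Finset.range (n + 1), stepProb q n k * g k with hVdef
  have hVnn : ∀ n, 0 ≤ V n := fun n =>
    Finset.sum_nonneg fun k _ => mul_nonneg (stepProb_nonneg hq n k) (hgnn k)
  have hEf2 : ∀ n, ∑ k ∈ Finset.range (n + 1), stepProb q n k * f k ^ 2 = (n : ℝ) ^ 2 + V n := by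
    intro n
    have h1 := exp_sq hq hf0 hfs hg0 hgs n
    have h2 : ∑ k ∈ Finset.range (n + 1), stepProb q n k * (f k ^ 2 - g k)
        = ∑ k ∈ Finset.range (n + 1), stepProb q n k * f k ^ 2 - V n := by
      rw [hVdef, ← Finset.sum_sub_distrib]
      exact Finset.sum_congr rfl fun k _ => by ring
    rw [h2] at h1; linarith
  have hAV : ∀ n, A n = Real.sqrt (V n) / n := by
    intro n; rw [hA, hEf2]; ring_nf
  have hAnn : ∀ n, 0 ≤ A n := by
    intro n; rw [hAV]
    exact div_nonneg (Real.sqrt_nonneg _) (Nat.cast_nonneg n)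
  have hBnn : ∀ k, 0 ≤ B k := fun k =>
    (hB k) ▸ div_nonneg (Real.sqrt_nonneg _) (hfnn k)
  have hBle1 : ∀ k, B k ≤ 1 := by
    intro k; rw [hB]
    rcases Nat.eq_zero_or_pos k with hk | hk
    · simp [hk, hf0]
    · rw [div_le_one (hfpos k hk)]
      calc Real.sqrt (g k) ≤ Real.sqrt (f k ^ 2) := Real.sqrt_le_sqrt (hgle k)
        _ = f k := Real.sqrt_sq (hfnn k)
  have hBbddle : Filter.IsBoundedUnder (· ≤ ·) Filter.atTop B :=
    Filter.isBoundedUnder_of ⟨1, hBle1⟩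
  have hBbddge : Filter.IsBoundedUnder (· ≥ ·) Filter.atTop B :=
    Filter.isBoundedUnder_of ⟨0, hBnn⟩
  have hlam0 : 0 ≤ lam := by
    rw [← hlam]
    exact Filter.le_limsup_of_frequently_le
      ((Filter.Eventually.of_forall hBnn).frequently) hBbddle
  have hmulam : mu ≤ lam := by
    rw [← hlam, ← hmu]; exact Filter.liminf_le_limsup hBbddle hBbddge
  -- main upper bound machinery
  have main_upper : ∀ c, lam < c → c < 1 → ∃ D, 0 ≤ D ∧ ∀ n : ℕ, 1 ≤ n →
      A n ≤ D / n + c / Real.sqrt (1 - c ^ 2) := by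
    intro c hc1 hc2
    have hc0 : 0 < c := lt_of_le_of_lt hlam0 hc1
    have hcsq : 0 < 1 - c ^ 2 := by nlinarith
    have hssq := Real.sq_sqrt hcsq.le
    have hspos : 0 < Real.sqrt (1 - c ^ 2) := Real.sqrt_pos.2 hcsq
    have hev : ∀ᶠ k in Filter.atTop, B k < c :=
      Filter.eventually_lt_of_limsup_lt (by rw [hlam]; exact hc1) hBbddle
    obtain ⟨K, hK⟩ := Filter.eventually_atTop.1 hev
    have termbd : ∀ k, g k ≤ g (K + 1) + c ^ 2 * f k ^ 2 := by
      intro k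
      rcases le_or_gt k (K + 1) with hk | hk
      · have := hgmono hk
        nlinarith [hfnn k, sq_nonneg (f k)]
      · have hk1 : 1 ≤ k := by omega
        have hfk := hfpos k hk1
        have hb := hK k (by omega)
        rw [hB, div_lt_iff₀ hfk] at hb
        have : g k ≤ (c * f k) ^ 2 := by
          have h1 : Real.sqrt (g k) ^ 2 ≤ (c * f k) ^ 2 :=
            pow_le_pow_left₀ (Real.sqrt_nonneg _) hb.le 2
          rwa [Real.sq_sqrt (hgnn k)] at h1
        nlinarith [hgnn (K + 1)]
    have Vb : ∀ n : ℕ, V n ≤ (g (K + 1) + c ^ 2 * (n : ℝ) ^ 2) / (1 - c ^ 2) := by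
      intro n
      have h1 : V n ≤ g (K + 1) + c ^ 2 * ((n : ℝ) ^ 2 + V n) := by
        calc V n ≤ ∑ k ∈ Finset.range (n + 1),
              stepProb q n k * (g (K + 1) + c ^ 2 * f k ^ 2) := by
              exact Finset.sum_le_sum fun k _ =>
                mul_le_mul_of_nonneg_left (termbd k) (stepProb_nonneg hq n k)
          _ = g (K + 1) * (∑ k ∈ Finset.range (n + 1), stepProb q n k)
              + c ^ 2 * (∑ k ∈ Finset.range (n + 1), stepProb q n k * f k ^ 2) := by
              rw [Finset.mul_sum, Finset.mul_sum, ← Finset.sum_add_distrib]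
              exact Finset.sum_congr rfl fun k _ => by ring
          _ = g (K + 1) + c ^ 2 * ((n : ℝ) ^ 2 + V n) := by rw [exp_mass, hEf2]; ring
      rw [le_div_iff₀ hcsq]; nlinarith
    refine ⟨Real.sqrt (g (K + 1) / (1 - c ^ 2)), Real.sqrt_nonneg _, ?_⟩
    intro n hn
    have hnpos : (0 : ℝ) < n := by exact_mod_cast hn
    have hsplit : Real.sqrt (V n) ≤ Real.sqrt (g (K + 1) / (1 - c ^ 2))
        + c * n / Real.sqrt (1 - c ^ 2) := by
      have h1 : V n ≤ g (K + 1) / (1 - c ^ 2) + c ^ 2 * (n : ℝ) ^ 2 / (1 - c ^ 2) := by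
        have := Vb n; rw [← add_div]; linarith [this]
      have h2 : Real.sqrt (V n) ≤ Real.sqrt
          (g (K + 1) / (1 - c ^ 2) + c ^ 2 * (n : ℝ) ^ 2 / (1 - c ^ 2)) :=
        Real.sqrt_le_sqrt h1
      have h3 := sqrt_add_le' (g (K + 1) / (1 - c ^ 2)) (c ^ 2 * (n : ℝ) ^ 2 / (1 - c ^ 2))
        (div_nonneg (hgnn _) hcsq.le) (div_nonneg (by positivity) hcsq.le)
      have h4 : Real.sqrt (c ^ 2 * (n : ℝ) ^ 2 / (1 - c ^ 2))
          = c * n / Real.sqrt (1 - c ^ 2) := by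
        rw [show c ^ 2 * (n : ℝ) ^ 2 / (1 - c ^ 2)
            = (c * n / Real.sqrt (1 - c ^ 2)) ^ 2 by rw [div_pow, hssq]; ring]
        exact Real.sqrt_sq (by positivity)
      rw [h4] at h3
      linarith
    rw [hAV]
    rw [div_le_iff₀ hnpos]
    calc Real.sqrt (V n) ≤ Real.sqrt (g (K + 1) / (1 - c ^ 2))
        + c * n / Real.sqrt (1 - c ^ 2) := hsplit
      _ = (Real.sqrt (g (K + 1) / (1 - c ^ 2)) / n + c / Real.sqrt (1 - c ^ 2)) * n := by
        field_simp
  -- global boundedness of A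
  obtain ⟨D₀, hD₀0, hD₀⟩ := main_upper ((lam + 1) / 2) (by linarith) (by linarith)
  have hAbddle : Filter.IsBoundedUnder (· ≤ ·) Filter.atTop A := by
    refine ⟨D₀ + (lam + 1) / 2 / Real.sqrt (1 - ((lam + 1) / 2) ^ 2), ?_⟩
    rw [Filter.eventually_map]
    filter_upwards [Filter.eventually_ge_atTop 1] with n hn
    have h1 := hD₀ n hn
    have hnpos : (1 : ℝ) ≤ n := by exact_mod_cast hn
    have : D₀ / n ≤ D₀ := by
      rw [div_le_iff₀ (by linarith)]; nlinarith
    linarith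
  have hAbddge : Filter.IsBoundedUnder (· ≥ ·) Filter.atTop A :=
    Filter.isBoundedUnder_of ⟨0, hAnn⟩
  have h0le : (0 : ℝ) ≤ Filter.liminf A Filter.atTop :=
    Filter.le_liminf_of_le hAbddle.isCoboundedUnder_ge (Filter.Eventually.of_forall hAnn)
  constructor
  · -- limsup part
    apply le_of_forall_gt_imp_ge_of_dense
    intro x hx
    have h1sq : 0 < 1 - lam ^ 2 := by nlinarith
    have hcont : ContinuousAt (fun s : ℝ => s / Real.sqrt (1 - s ^ 2)) lam := by
      apply ContinuousAt.div continuousAt_id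
      · exact (Real.continuous_sqrt.comp (continuous_const.sub (continuous_pow 2))).continuousAt
      · exact ne_of_gt (Real.sqrt_pos.2 h1sq)
    have hev1 : ∀ᶠ s in nhds lam, s / Real.sqrt (1 - s ^ 2) < x :=
      hcont.tendsto.eventually_lt_const hx
    have hev2 : ∀ᶠ s in nhds lam, s < 1 := eventually_lt_nhds hlam1
    haveI hne : (nhdsWithin lam (Set.Ioi lam)).NeBot := nhdsGT_neBot lam
    obtain ⟨c, ⟨hcx, hc1⟩, hclam⟩ :=
      (((hev1.and hev2).filter_mono nhdsWithin_le_nhds).and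
        (eventually_mem_nhdsWithin (a := lam) (s := Set.Ioi lam))).exists
    have hclam' : lam < c := hclam
    obtain ⟨D, hD0, hDbd⟩ := main_upper c hclam' hc1
    have htend : Filter.Tendsto (fun n : ℕ => D / n) Filter.atTop (nhds 0) :=
      tendsto_const_div_atTop_nhds_zero_nat D
    have hevn : ∀ᶠ n : ℕ in Filter.atTop, D / n < x - c / Real.sqrt (1 - c ^ 2) := by
      apply htend.eventually_lt_const
      linarith
    apply Filter.limsup_le_of_le hAbddge.isCoboundedUnder_le
    filter_upwards [hevn, Filter.eventually_ge_atTop 1] with n h1 h2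
    have := hDbd n h2
    linarith
  · -- liminf part
    by_cases hmu0 : mu ≤ 0
    · have : mu / Real.sqrt (1 - mu ^ 2) ≤ 0 :=
        div_nonpos_iff.2 (Or.inr ⟨hmu0, Real.sqrt_nonneg _⟩)
      exact le_trans this h0le
    · push_neg at hmu0
      have hmu1 : mu < 1 := lt_of_le_of_lt hmulam hlam1
      apply le_of_forall_lt_imp_le_of_dense
      intro y hy
      rcases le_or_gt y 0 with hy0 | hy0
      · exact hy0.trans h0le
      have hmusq : 0 < 1 - mu ^ 2 := by nlinarith
      have hcont : ContinuousAt (fun s : ℝ => s / Real.sqrt (1 - s ^ 2)) mu := by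
        apply ContinuousAt.div continuousAt_id
        · exact (Real.continuous_sqrt.comp (continuous_const.sub (continuous_pow 2))).continuousAt
        · exact ne_of_gt (Real.sqrt_pos.2 hmusq)
      have hev1 : ∀ᶠ s in nhds mu, y < s / Real.sqrt (1 - s ^ 2) :=
        hcont.tendsto.eventually_const_lt hy
      have hev2 : ∀ᶠ s in nhds mu, 0 < s := eventually_gt_nhds hmu0
      haveI hne : (nhdsWithin mu (Set.Iio mu)).NeBot := nhdsLT_neBot mu
      obtain ⟨c, ⟨hcy, hc0⟩, hcmu⟩ :=
        (((hev1.and hev2).filter_mono nhdsWithin_le_nhds).and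
          (eventually_mem_nhdsWithin (a := mu) (s := Set.Iio mu))).exists
      have hcmu' : c < mu := hcmu
      have hc1 : c < 1 := hcmu'.trans hmu1
      have hcsq : 0 < 1 - c ^ 2 := by nlinarith
      have hssq := Real.sq_sqrt hcsq.le
      have hspos : 0 < Real.sqrt (1 - c ^ 2) := Real.sqrt_pos.2 hcsq
      have hev : ∀ᶠ k in Filter.atTop, c < B k :=
        Filter.eventually_lt_of_lt_liminf (by rw [hmu]; exact hcmu') hBbddge
      obtain ⟨K, hK⟩ := Filter.eventually_atTop.1 hev
      set C := c ^ 2 * f (K + 1) ^ 2 with hCdef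
      have hC0 : 0 ≤ C := by positivity
      have termlow : ∀ k, c ^ 2 * f k ^ 2 - C ≤ g k := by
        intro k
        rcases le_or_gt k (K + 1) with hk | hk
        · have hfle := hfmono hk
          have : c ^ 2 * f k ^ 2 ≤ C := by
            rw [hCdef]
            have h2 : f k ^ 2 ≤ f (K + 1) ^ 2 := pow_le_pow_left₀ (hfnn k) hfle 2
            exact mul_le_mul_of_nonneg_left h2 (sq_nonneg c)
          linarith [hgnn k]
        · have hk1 : 1 ≤ k := by omega
          have hfk := hfpos k hk1
          have hb := hK k (by omega)
          rw [hB, lt_div_iff₀ hfk] at hb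
          have h1 : (c * f k) ^ 2 ≤ Real.sqrt (g k) ^ 2 :=
            pow_le_pow_left₀ (by positivity) hb.le 2
          rw [Real.sq_sqrt (hgnn k)] at h1
          nlinarith
      have Vlow : ∀ n : ℕ, (c ^ 2 * (n : ℝ) ^ 2 - C) / (1 - c ^ 2) ≤ V n := by
        intro n
        have h1 : c ^ 2 * ((n : ℝ) ^ 2 + V n) - C ≤ V n := by
          calc c ^ 2 * ((n : ℝ) ^ 2 + V n) - C
              = ∑ k ∈ Finset.range (n + 1), stepProb q n k * (c ^ 2 * f k ^ 2 - C) := by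
                rw [show (∑ k ∈ Finset.range (n + 1), stepProb q n k * (c ^ 2 * f k ^ 2 - C))
                    = c ^ 2 * (∑ k ∈ Finset.range (n + 1), stepProb q n k * f k ^ 2)
                      - C * (∑ k ∈ Finset.range (n + 1), stepProb q n k) by
                  rw [Finset.mul_sum, Finset.mul_sum, ← Finset.sum_sub_distrib]
                  exact Finset.sum_congr rfl fun k _ => by ring]
                rw [exp_mass, hEf2]; ring
            _ ≤ V n :=
                Finset.sum_le_sum fun k _ =>
                  mul_le_mul_of_nonneg_left (termlow k) (stepProb_nonneg hq n k)
        rw [div_le_iff₀ hcsq]; nlinarith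
      have hd : 0 < c ^ 2 - y ^ 2 * (1 - c ^ 2) := by
        rw [lt_div_iff₀ hspos] at hcy
        have h5 : 0 < y * Real.sqrt (1 - c ^ 2) := mul_pos hy0 hspos
        nlinarith [hssq, h5, hc0, hcy]
      set d := c ^ 2 - y ^ 2 * (1 - c ^ 2) with hddef
      apply Filter.le_liminf_of_le hAbddle.isCoboundedUnder_ge
      have hevn : ∀ᶠ n : ℕ in Filter.atTop, Real.sqrt (C / d) ≤ (n : ℝ) :=
        tendsto_natCast_atTop_atTop.eventually_ge_atTop (Real.sqrt (C / d))
      filter_upwards [hevn, Filter.eventually_ge_atTop 1] with n h1 h2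
      have hnpos : (0 : ℝ) < n := by exact_mod_cast h2
      have hn2 : C / d ≤ (n : ℝ) ^ 2 := by
        have := pow_le_pow_left₀ (Real.sqrt_nonneg (C / d)) h1 2
        rwa [Real.sq_sqrt (div_nonneg hC0 hd.le)] at this
      have hnd : C ≤ (n : ℝ) ^ 2 * d := by
        rw [div_le_iff₀ hd] at hn2; linarith
      have hVy : y ^ 2 * (n : ℝ) ^ 2 ≤ V n := by
        have := Vlow n
        have h3 : y ^ 2 * (n : ℝ) ^ 2 ≤ (c ^ 2 * (n : ℝ) ^ 2 - C) / (1 - c ^ 2) := by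
          rw [le_div_iff₀ hcsq]; nlinarith
        linarith
      have hsq : y * n ≤ Real.sqrt (V n) := by
        have h4 : Real.sqrt (y ^ 2 * (n : ℝ) ^ 2) ≤ Real.sqrt (V n) := Real.sqrt_le_sqrt hVy
        rwa [show y ^ 2 * (n : ℝ) ^ 2 = (y * n) ^ 2 by ring,
          Real.sqrt_sq (by positivity)] at h4
      rw [hAV, le_div_iff₀ hnpos]
      linarith
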